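/- Let l = l(u,ρ,s) be a smooth Lagrangian density and suppose smooth fields (u,ρ,s) on Ω satisfy ∂_t(∂l/∂u) + £_u(∂l/∂u) − ρ∇(∂l/∂ρ) − s∇(∂l/∂s) = b, ∂_t ρ + div(ρu) = θ_ρ, ∂_t s + div(su) = θ_s, where £_u m = u·∇m + (∇u)ᵀm + m div u. Then the energy density 𝔢 = (∂l/∂u)·u − l satisfies ∂_t 𝔢 = div( −((∂l/∂u)·u)u + ρ(∂l/∂ρ)u + s(∂l/∂s)u ) + b·u − θ_ρ ∂l/∂ρ − θ_s ∂l/∂s. -/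

import Mathlib

open scoped BigOperators

noncomputable def pd {n : ℕ} (i : Fin n) (f : (Fin n → ℝ) → ℝ) (x : Fin n → ℝ) : ℝ :=
  fderiv ℝ f x (Pi.single i 1)

/-- `(∂l/∂u)_i` of a Lagrangian density `l(u,ρ,s)`, evaluated at `(v, r, sv)`. -/
noncomputable def Dlu {n : ℕ} (l : (Fin n → ℝ) → ℝ → ℝ → ℝ)
    (v : Fin n → ℝ) (r sv : ℝ) (i : Fin n) : ℝ :=
  fderiv ℝ (fun w => l w r sv) v (Pi.single i 1)

/-- `∂l/∂ρ` evaluated at `(v, r, sv)`. -/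
noncomputable def Dlρ {n : ℕ} (l : (Fin n → ℝ) → ℝ → ℝ → ℝ)
    (v : Fin n → ℝ) (r sv : ℝ) : ℝ :=
  deriv (fun r' => l v r' sv) r

/-- `∂l/∂s` evaluated at `(v, r, sv)`. -/
noncomputable def Dls {n : ℕ} (l : (Fin n → ℝ) → ℝ → ℝ → ℝ)
    (v : Fin n → ℝ) (r sv : ℝ) : ℝ :=
  deriv (fun t => l v r t) sv

/-
Differentiating `𝔢 = m·u − l` (with `m = ∂l/∂u`) in time, the chain rule for `l` produces
`m·∂ₜu`, which cancels against the same term of `∂ₜ(m·u)`: this is the Legendre-transform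
identity `∂ₜ𝔢 = ∂ₜm·u − (∂l/∂ρ) ∂ₜρ − (∂l/∂s) ∂ₜs`. Contracting the momentum equation with `u`,
the Lie-derivative terms combine into a divergence, `u·£ᵤm = div((m·u)u)`, and the remaining
terms pair with the continuity equations through `ρ u·∇φ + φ div(ρu) = div(ρφu)` for
`φ = ∂l/∂ρ`, and likewise for `s`.
-/

section Slices

variable {E F G : Type*} [NormedAddCommGroup E] [NormedSpace ℝ E] [NormedAddCommGroup F]
  [NormedSpace ℝ F] [NormedAddCommGroup G] [NormedSpace ℝ G] {f : E × F → G}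

lemma Differentiable.differentiableAt_slice_fst (hf : Differentiable ℝ f) (y : F) (x : E) :
    DifferentiableAt ℝ (fun x' => f (x', y)) x :=
  (hf _).comp x (differentiableAt_id.prodMk (differentiableAt_const y))

lemma Differentiable.differentiableAt_slice_snd (hf : Differentiable ℝ f) (x : E) (y : F) :
    DifferentiableAt ℝ (fun y' => f (x, y')) y :=
  (hf _).comp y ((differentiableAt_const x).prodMk differentiableAt_id)

end Slices

section PartialDerivative

variable {n : ℕ} {f g : (Fin n → ℝ) → ℝ} {x : Fin n → ℝ}

lemma pd_add (hf : DifferentiableAt ℝ f x) (hg : DifferentiableAt ℝ g x) (c : Fin n) :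
    pd c (fun y => f y + g y) x = pd c f x + pd c g x := by
  simp only [pd, fderiv_fun_add hf hg, add_apply]

lemma pd_neg (c : Fin n) : pd c (fun y => -f y) x = -pd c f x := by
  simp only [pd, fderiv_fun_neg, neg_apply]

lemma pd_mul (hf : DifferentiableAt ℝ f x) (hg : DifferentiableAt ℝ g x) (c : Fin n) :
    pd c (fun y => f y * g y) x = pd c f x * g x + f x * pd c g x := by
  simp only [pd, fderiv_fun_mul hf hg, add_apply, smul_apply, smul_eq_mul]
  ring

lemma pd_sum {ι : Type*} (S : Finset ι) {F : ι → (Fin n → ℝ) → ℝ}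
    (hF : ∀ i ∈ S, DifferentiableAt ℝ (F i) x) (c : Fin n) :
    pd c (fun y => ∑ i ∈ S, F i y) x = ∑ i ∈ S, pd c (F i) x := by
  simp only [pd, fderiv_fun_sum hF, sum_apply]

end PartialDerivative

section LagrangianPartials

variable {n : ℕ} {l : (Fin n → ℝ) → ℝ → ℝ → ℝ} {v : Fin n → ℝ} {r sv : ℝ}

lemma Dlu_eq_fderiv
    (hl : DifferentiableAt ℝ (fun p : (Fin n → ℝ) × ℝ × ℝ => l p.1 p.2.1 p.2.2) (v, r, sv))
    (i : Fin n) :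
    Dlu l v r sv i
      = fderiv ℝ (fun p : (Fin n → ℝ) × ℝ × ℝ => l p.1 p.2.1 p.2.2) (v, r, sv)
          (Pi.single i 1, 0, 0) := by
  have hslice : HasFDerivAt (fun w : Fin n → ℝ => (w, r, sv))
      ((ContinuousLinearMap.id ℝ (Fin n → ℝ)).prod 0) v :=
    (hasFDerivAt_id v).prodMk (hasFDerivAt_const (r, sv) v)
  exact congrArg (· (Pi.single i 1)) (hl.hasFDerivAt.comp v hslice).fderiv

lemma Dlρ_eq_fderiv
    (hl : DifferentiableAt ℝ (fun p : (Fin n → ℝ) × ℝ × ℝ => l p.1 p.2.1 p.2.2) (v, r, sv)) :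
    Dlρ l v r sv
      = fderiv ℝ (fun p : (Fin n → ℝ) × ℝ × ℝ => l p.1 p.2.1 p.2.2) (v, r, sv) (0, 1, 0) := by
  have hslice : HasDerivAt (fun r' : ℝ => (v, r', sv)) ((0 : Fin n → ℝ), (1 : ℝ), (0 : ℝ)) r :=
    (hasDerivAt_const r v).prodMk ((hasDerivAt_id r).prodMk (hasDerivAt_const r sv))
  exact (hl.hasFDerivAt.comp_hasDerivAt r hslice).deriv

lemma Dls_eq_fderiv
    (hl : DifferentiableAt ℝ (fun p : (Fin n → ℝ) × ℝ × ℝ => l p.1 p.2.1 p.2.2) (v, r, sv)) :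
    Dls l v r sv
      = fderiv ℝ (fun p : (Fin n → ℝ) × ℝ × ℝ => l p.1 p.2.1 p.2.2) (v, r, sv) (0, 0, 1) := by
  have hslice : HasDerivAt (fun s' : ℝ => (v, r, s')) ((0 : Fin n → ℝ), (0 : ℝ), (1 : ℝ)) sv :=
    (hasDerivAt_const sv v).prodMk ((hasDerivAt_const sv r).prodMk (hasDerivAt_id sv))
  exact (hl.hasFDerivAt.comp_hasDerivAt sv hslice).deriv

lemma fderiv_apply_eq_sum_partials
    (hl : DifferentiableAt ℝ (fun p : (Fin n → ℝ) × ℝ × ℝ => l p.1 p.2.1 p.2.2) (v, r, sv))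
    (v' : Fin n → ℝ) (r' s' : ℝ) :
    fderiv ℝ (fun p : (Fin n → ℝ) × ℝ × ℝ => l p.1 p.2.1 p.2.2) (v, r, sv) (v', r', s')
      = (∑ i, Dlu l v r sv i * v' i) + Dlρ l v r sv * r' + Dls l v r sv * s' := by
  set L := fderiv ℝ (fun p : (Fin n → ℝ) × ℝ × ℝ => l p.1 p.2.1 p.2.2) (v, r, sv)
  have hsplit : (v', r', s') = (∑ i, v' i • ((Pi.single i 1 : Fin n → ℝ), (0 : ℝ), (0 : ℝ)))
      + r' • ((0 : Fin n → ℝ), (1 : ℝ), (0 : ℝ)) + s' • ((0 : Fin n → ℝ), (0 : ℝ), (1 : ℝ)) := by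
    ext <;> simp [Prod.fst_sum, Prod.snd_sum, Finset.sum_apply, Pi.single_apply]
  rw [hsplit, Dlρ_eq_fderiv hl, Dls_eq_fderiv hl]
  simp only [map_add, map_sum, map_smul, smul_eq_mul, Dlu_eq_fderiv hl, L, mul_comm (v' _)]
  ring

lemma contDiff_Dlu {k : WithTop ℕ∞}
    (hl : ContDiff ℝ (k + 1) (fun p : (Fin n → ℝ) × ℝ × ℝ => l p.1 p.2.1 p.2.2)) (i : Fin n) :
    ContDiff ℝ k (fun p : (Fin n → ℝ) × ℝ × ℝ => Dlu l p.1 p.2.1 p.2.2 i) := by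
  have hd := hl.differentiable (by simp)
  simp only [Dlu_eq_fderiv (hd _)]
  exact (hl.fderiv_right le_rfl).clm_apply contDiff_const

lemma contDiff_Dlρ {k : WithTop ℕ∞}
    (hl : ContDiff ℝ (k + 1) (fun p : (Fin n → ℝ) × ℝ × ℝ => l p.1 p.2.1 p.2.2)) :
    ContDiff ℝ k (fun p : (Fin n → ℝ) × ℝ × ℝ => Dlρ l p.1 p.2.1 p.2.2) := by
  have hd := hl.differentiable (by simp)
  simp only [Dlρ_eq_fderiv (hd _)]
  exact (hl.fderiv_right le_rfl).clm_apply contDiff_const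

lemma contDiff_Dls {k : WithTop ℕ∞}
    (hl : ContDiff ℝ (k + 1) (fun p : (Fin n → ℝ) × ℝ × ℝ => l p.1 p.2.1 p.2.2)) :
    ContDiff ℝ k (fun p : (Fin n → ℝ) × ℝ × ℝ => Dls l p.1 p.2.1 p.2.2) := by
  have hd := hl.differentiable (by simp)
  simp only [Dls_eq_fderiv (hd _)]
  exact (hl.fderiv_right le_rfl).clm_apply contDiff_const

lemma hasDerivAt_comp_partials {v : ℝ → Fin n → ℝ} {r σ : ℝ → ℝ} {v' : Fin n → ℝ} {r' σ' t : ℝ}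
    (hl : DifferentiableAt ℝ (fun p : (Fin n → ℝ) × ℝ × ℝ => l p.1 p.2.1 p.2.2) (v t, r t, σ t))
    (hv : ∀ i, HasDerivAt (fun τ => v τ i) (v' i) t) (hr : HasDerivAt r r' t)
    (hσ : HasDerivAt σ σ' t) :
    HasDerivAt (fun τ => l (v τ) (r τ) (σ τ))
      ((∑ i, Dlu l (v t) (r t) (σ t) i * v' i)
        + Dlρ l (v t) (r t) (σ t) * r' + Dls l (v t) (r t) (σ t) * σ') t := by
  rw [← fderiv_apply_eq_sum_partials hl]
  exact hl.hasFDerivAt.comp_hasDerivAt t ((hasDerivAt_pi.2 hv).prodMk (hr.prodMk hσ))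

end LagrangianPartials

noncomputable def energyDensity {n : ℕ} (l : (Fin n → ℝ) → ℝ → ℝ → ℝ)
    (v : Fin n → ℝ) (r sv : ℝ) : ℝ :=
  (∑ i, Dlu l v r sv i * v i) - l v r sv

lemma hasDerivAt_energyDensity_comp {n : ℕ} {l : (Fin n → ℝ) → ℝ → ℝ → ℝ}
    {v : ℝ → Fin n → ℝ} {r σ : ℝ → ℝ} {v' m' : Fin n → ℝ} {r' σ' t : ℝ}
    (hl : DifferentiableAt ℝ (fun p : (Fin n → ℝ) × ℝ × ℝ => l p.1 p.2.1 p.2.2) (v t, r t, σ t))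
    (hv : ∀ i, HasDerivAt (fun τ => v τ i) (v' i) t) (hr : HasDerivAt r r' t)
    (hσ : HasDerivAt σ σ' t) (hm : ∀ i, HasDerivAt (fun τ => Dlu l (v τ) (r τ) (σ τ) i) (m' i) t) :
    HasDerivAt (fun τ => energyDensity l (v τ) (r τ) (σ τ))
      ((∑ i, m' i * v t i) - Dlρ l (v t) (r t) (σ t) * r' - Dls l (v t) (r t) (σ t) * σ') t := by
  refine ((HasDerivAt.fun_sum (u := Finset.univ) fun i _ => (hm i).fun_mul (hv i)).fun_sub
    (hasDerivAt_comp_partials hl hv hr hσ)).congr_deriv ?_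
  rw [Finset.sum_add_distrib]
  ring

section VectorCalculus

variable {n : ℕ} {x : Fin n → ℝ}

noncomputable def lieDerivOneFormDensity (u m : (Fin n → ℝ) → Fin n → ℝ) (x : Fin n → ℝ)
    (i : Fin n) : ℝ :=
  (∑ c, u x c * pd c (fun y => m y i) x) + (∑ c, m x c * pd i (fun y => u y c) x)
    + m x i * ∑ c, pd c (fun y => u y c) x

lemma sum_pd_mul_mul {ρ φ : (Fin n → ℝ) → ℝ} {u : (Fin n → ℝ) → Fin n → ℝ}
    (hρ : DifferentiableAt ℝ ρ x) (hφ : DifferentiableAt ℝ φ x)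
    (hu : ∀ c, DifferentiableAt ℝ (fun y => u y c) x) :
    ∑ c, pd c (fun y => ρ y * φ y * u y c) x
      = ρ x * (∑ c, u x c * pd c φ x) + φ x * ∑ c, pd c (fun y => ρ y * u y c) x := by
  have hc : ∀ c, pd c (fun y => ρ y * φ y * u y c) x
      = ρ x * (u x c * pd c φ x) + φ x * pd c (fun y => ρ y * u y c) x := by
    intro c
    rw [show (fun y => ρ y * φ y * u y c) = fun y => φ y * (ρ y * u y c) from
      funext fun y => by ring, pd_mul hφ (hρ.fun_mul (hu c))]
    ring
  rw [Finset.sum_congr rfl fun c _ => hc c, Finset.sum_add_distrib, Finset.mul_sum, Finset.mul_sum]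

lemma sum_pd_dot_mul {m u : (Fin n → ℝ) → Fin n → ℝ}
    (hm : ∀ i, DifferentiableAt ℝ (fun y => m y i) x)
    (hu : ∀ i, DifferentiableAt ℝ (fun y => u y i) x) :
    ∑ c, pd c (fun y => (∑ i, m y i * u y i) * u y c) x
      = ∑ i, lieDerivOneFormDensity u m x i * u x i := by
  have hdot : DifferentiableAt ℝ (fun y => ∑ i, m y i * u y i) x :=
    DifferentiableAt.fun_sum fun i _ => (hm i).fun_mul (hu i)
  have hc : ∀ c, pd c (fun y => (∑ i, m y i * u y i) * u y c) x
      = (∑ i, (pd c (fun y => m y i) x * u x i + m x i * pd c (fun y => u y i) x)) * u x c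
        + (∑ i, m x i * u x i) * pd c (fun y => u y c) x := by
    intro c
    rw [pd_mul hdot (hu c), pd_sum _ fun i _ => (hm i).fun_mul (hu i)]
    simp only [pd_mul (hm _) (hu _)]
  rw [Finset.sum_congr rfl fun c _ => hc c]
  simp only [lieDerivOneFormDensity, add_mul, Finset.sum_add_distrib, Finset.sum_mul]
  congr 1
  · congr 1
    rw [Finset.sum_comm]
    exact Finset.sum_congr rfl fun i _ => Finset.sum_congr rfl fun c _ => by ring
  · rw [Finset.sum_comm]
    simp only [Finset.mul_sum, Finset.sum_mul]
    exact Finset.sum_congr rfl fun i _ => Finset.sum_congr rfl fun c _ => by ring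

end VectorCalculus

lemma energy_balance_at {n : ℕ} {l : (Fin n → ℝ) → ℝ → ℝ → ℝ}
    {u b : ℝ → (Fin n → ℝ) → (Fin n → ℝ)} {ρ s θρ θs : ℝ → (Fin n → ℝ) → ℝ} {t : ℝ}
    {x : Fin n → ℝ}
    (hl : DifferentiableAt ℝ (fun p : (Fin n → ℝ) × ℝ × ℝ => l p.1 p.2.1 p.2.2)
      (u t x, ρ t x, s t x))
    (hut : ∀ i, DifferentiableAt ℝ (fun τ => u τ x i) t)
    (hρt : DifferentiableAt ℝ (fun τ => ρ τ x) t) (hst : DifferentiableAt ℝ (fun τ => s τ x) t)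
    (hmt : ∀ i, DifferentiableAt ℝ (fun τ => Dlu l (u τ x) (ρ τ x) (s τ x) i) t)
    (hux : ∀ i, DifferentiableAt ℝ (fun y => u t y i) x)
    (hρx : DifferentiableAt ℝ (fun y => ρ t y) x) (hsx : DifferentiableAt ℝ (fun y => s t y) x)
    (hmx : ∀ i, DifferentiableAt ℝ (fun y => Dlu l (u t y) (ρ t y) (s t y) i) x)
    (hφx : DifferentiableAt ℝ (fun y => Dlρ l (u t y) (ρ t y) (s t y)) x)
    (hψx : DifferentiableAt ℝ (fun y => Dls l (u t y) (ρ t y) (s t y)) x)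
    (hmom : ∀ i,
      deriv (fun τ => Dlu l (u τ x) (ρ τ x) (s τ x) i) t
        + lieDerivOneFormDensity (u t) (fun y i => Dlu l (u t y) (ρ t y) (s t y) i) x i
        - ρ t x * pd i (fun y => Dlρ l (u t y) (ρ t y) (s t y)) x
        - s t x * pd i (fun y => Dls l (u t y) (ρ t y) (s t y)) x
      = b t x i)
    (hmass : deriv (fun τ => ρ τ x) t + ∑ j, pd j (fun y => ρ t y * u t y j) x = θρ t x)
    (hent : deriv (fun τ => s τ x) t + ∑ j, pd j (fun y => s t y * u t y j) x = θs t x) :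
    deriv (fun τ => energyDensity l (u τ x) (ρ τ x) (s τ x)) t
      = (∑ c, pd c (fun y =>
            -((∑ i, Dlu l (u t y) (ρ t y) (s t y) i * u t y i) * u t y c)
              + ρ t y * Dlρ l (u t y) (ρ t y) (s t y) * u t y c
              + s t y * Dls l (u t y) (ρ t y) (s t y) * u t y c) x)
        + (∑ i, b t x i * u t x i)
        - θρ t x * Dlρ l (u t x) (ρ t x) (s t x)
        - θs t x * Dls l (u t x) (ρ t x) (s t x) := by
  have hflux : ∀ c, pd c (fun y =>
      -((∑ i, Dlu l (u t y) (ρ t y) (s t y) i * u t y i) * u t y c)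
        + ρ t y * Dlρ l (u t y) (ρ t y) (s t y) * u t y c
        + s t y * Dls l (u t y) (ρ t y) (s t y) * u t y c) x
      = -pd c (fun y => (∑ i, Dlu l (u t y) (ρ t y) (s t y) i * u t y i) * u t y c) x
        + pd c (fun y => ρ t y * Dlρ l (u t y) (ρ t y) (s t y) * u t y c) x
        + pd c (fun y => s t y * Dls l (u t y) (ρ t y) (s t y) * u t y c) x := fun c => by
    rw [pd_add (by fun_prop) (by fun_prop), pd_add (by fun_prop) (by fun_prop), pd_neg]
  have hmom_u : ∑ i, deriv (fun τ => Dlu l (u τ x) (ρ τ x) (s τ x) i) t * u t x i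
      = (∑ i, b t x i * u t x i)
        - (∑ i, lieDerivOneFormDensity (u t) (fun y i => Dlu l (u t y) (ρ t y) (s t y) i) x i
            * u t x i)
        + ρ t x * (∑ i, u t x i * pd i (fun y => Dlρ l (u t y) (ρ t y) (s t y)) x)
        + s t x * (∑ i, u t x i * pd i (fun y => Dls l (u t y) (ρ t y) (s t y)) x) := by
    rw [Finset.mul_sum, Finset.mul_sum, ← Finset.sum_sub_distrib, ← Finset.sum_add_distrib,
      ← Finset.sum_add_distrib]
    exact Finset.sum_congr rfl fun i _ => by rw [← hmom i]; ring
  rw [(hasDerivAt_energyDensity_comp hl (fun i => (hut i).hasDerivAt) hρt.hasDerivAt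
      hst.hasDerivAt (fun i => (hmt i).hasDerivAt)).deriv,
    Finset.sum_congr rfl fun c _ => hflux c, Finset.sum_add_distrib, Finset.sum_add_distrib,
    Finset.sum_neg_distrib, sum_pd_dot_mul hmx hux, sum_pd_mul_mul hρx hφx hux,
    sum_pd_mul_mul hsx hψx hux]
  linear_combination hmom_u - Dlρ l (u t x) (ρ t x) (s t x) * hmass
    - Dls l (u t x) (ρ t x) (s t x) * hent

/-- Local energy balance for a general Lagrangian density `l(u,ρ,s)`: if
`∂_t(∂l/∂u) + £_u(∂l/∂u) − ρ∇(∂l/∂ρ) − s∇(∂l/∂s) = b`, `∂_tρ + div(ρu) = θ_ρ`,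
`∂_t s + div(su) = θ_s` (with `£_u m = u·∇m + (∇u)ᵀm + m div u`), then
`𝔢 = (∂l/∂u)·u − l` satisfies
`∂_t 𝔢 = div(−((∂l/∂u)·u)u + ρ(∂l/∂ρ)u + s(∂l/∂s)u) + b·u − θ_ρ ∂l/∂ρ − θ_s ∂l/∂s`. -/
theorem general_lagrangian_energy_balance {n : ℕ}
    (l : (Fin n → ℝ) → ℝ → ℝ → ℝ)
    (hl : ContDiff ℝ 2 (fun p : (Fin n → ℝ) × ℝ × ℝ => l p.1 p.2.1 p.2.2))
    (u b : ℝ → (Fin n → ℝ) → (Fin n → ℝ)) (ρ s θρ θs : ℝ → (Fin n → ℝ) → ℝ)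
    (hu : ∀ i, ContDiff ℝ 1 (fun p : ℝ × (Fin n → ℝ) => u p.1 p.2 i))
    (hρ : ContDiff ℝ 1 (fun p : ℝ × (Fin n → ℝ) => ρ p.1 p.2))
    (hs : ContDiff ℝ 1 (fun p : ℝ × (Fin n → ℝ) => s p.1 p.2))
    (hmom : ∀ t x i,
      deriv (fun τ => Dlu l (u τ x) (ρ τ x) (s τ x) i) t
        + (∑ c, u t x c * pd c (fun y => Dlu l (u t y) (ρ t y) (s t y) i) x)
        + (∑ c, Dlu l (u t x) (ρ t x) (s t x) c * pd i (fun y => u t y c) x)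
        + Dlu l (u t x) (ρ t x) (s t x) i * (∑ c, pd c (fun y => u t y c) x)
        - ρ t x * pd i (fun y => Dlρ l (u t y) (ρ t y) (s t y)) x
        - s t x * pd i (fun y => Dls l (u t y) (ρ t y) (s t y)) x
      = b t x i)
    (hmass : ∀ t x,
      deriv (fun τ => ρ τ x) t + ∑ j, pd j (fun y => ρ t y * u t y j) x = θρ t x)
    (hent : ∀ t x,
      deriv (fun τ => s τ x) t + ∑ j, pd j (fun y => s t y * u t y j) x = θs t x) :
    ∀ t x,
      deriv (fun τ =>
          (∑ i, Dlu l (u τ x) (ρ τ x) (s τ x) i * u τ x i)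
            - l (u τ x) (ρ τ x) (s τ x)) t
      = (∑ c, pd c (fun y =>
            -((∑ i, Dlu l (u t y) (ρ t y) (s t y) i * u t y i) * u t y c)
              + ρ t y * Dlρ l (u t y) (ρ t y) (s t y) * u t y c
              + s t y * Dls l (u t y) (ρ t y) (s t y) * u t y c) x)
        + (∑ i, b t x i * u t x i)
        - θρ t x * Dlρ l (u t x) (ρ t x) (s t x)
        - θs t x * Dls l (u t x) (ρ t x) (s t x) := by
  intro t x
  have hstate : ContDiff ℝ 1 (fun p : ℝ × (Fin n → ℝ) => (u p.1 p.2, ρ p.1 p.2, s p.1 p.2)) :=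
    (contDiff_pi.2 hu).prodMk (hρ.prodMk hs)
  have hm i := ((contDiff_Dlu (k := 1) hl i).comp hstate).differentiable one_ne_zero
  have hφ := ((contDiff_Dlρ (k := 1) hl).comp hstate).differentiable one_ne_zero
  have hψ := ((contDiff_Dls (k := 1) hl).comp hstate).differentiable one_ne_zero
  have hu' i := (hu i).differentiable one_ne_zero
  have hρ' := hρ.differentiable one_ne_zero
  have hs' := hs.differentiable one_ne_zero
  exact energy_balance_at (hl.differentiable (by norm_num) _)
    (fun i => (hu' i).differentiableAt_slice_fst x t) (hρ'.differentiableAt_slice_fst x t)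
    (hs'.differentiableAt_slice_fst x t) (fun i => (hm i).differentiableAt_slice_fst x t)
    (fun i => (hu' i).differentiableAt_slice_snd t x) (hρ'.differentiableAt_slice_snd t x)
    (hs'.differentiableAt_slice_snd t x) (fun i => (hm i).differentiableAt_slice_snd t x)
    (hφ.differentiableAt_slice_snd t x) (hψ.differentiableAt_slice_snd t x)
    (fun i => by rw [← hmom t x i, lieDerivOneFormDensity]; ring) (hmass t x) (hent t x)
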